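/- Let K ⊂ ℝ^d be compact, let U be a compact subset of C(K), let F : U → ℝ be a continuous functional, and let ϕ : ℝ → ℝ be a Lipschitz continuous function with sup_{t ∈ ℝ} |ϕ(t)| ≤ 1. Suppose that for every m ∈ ℕ there is a probability measure p_m on ℝ^m that is (ϕ, V)-rich for every compact set V ⊂ ℝ^m. Then for every ε > 0 and every δ ∈ (0,1) there exist m, M ∈ ℕ and points x_1, …, x_m ∈ K such that there is a measurable set E ⊆ (ℝ^m)^M with p_m^{⊗M}(E) ≥ 1 − δ, and for every (α_1, …, α_M) ∈ E there exist weights w_1, …, w_M ∈ ℝ such that for every u ∈ U, | F(u) − ∑_{i=1}^M w_i · ϕ( α_i · (u(x_1), …, u(x_m)) ) | < ε. -/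

import Mathlib

open scoped BigOperators RealInnerProductSpace
open MeasureTheory

/-- A probability measure `p` on `ℝ^q` is `(ϕ, V)`-rich if there exists a bounded continuous
`g : ℝ^q → ℝ` such that (i) the span of `{x ↦ g(a x + b)}` is dense in `C(V)` (sup norm), and
(ii) each `x ↦ g(a x + b)` has a bounded measurable representation
`g(a x + b) = ∫ β(α) ϕ(α · x) dp(α)` on `V`. -/
def IsRich {q : ℕ} (ϕ : ℝ → ℝ) (V : Set (EuclideanSpace ℝ (Fin q)))
    (p : Measure (EuclideanSpace ℝ (Fin q))) : Prop :=
  ∃ g : EuclideanSpace ℝ (Fin q) → ℝ,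
    Continuous g ∧ (∃ Cg : ℝ, ∀ x, |g x| ≤ Cg) ∧
    (∀ f : EuclideanSpace ℝ (Fin q) → ℝ, ContinuousOn f V → ∀ ε : ℝ, 0 < ε →
      ∃ (N : ℕ) (w a : Fin N → ℝ) (b : Fin N → EuclideanSpace ℝ (Fin q)),
        ∀ x ∈ V, |f x - ∑ i, w i * g (a i • x + b i)| < ε) ∧
    (∀ (a : ℝ) (b : EuclideanSpace ℝ (Fin q)),
      ∃ β : EuclideanSpace ℝ (Fin q) → ℝ,
        Measurable β ∧ (∃ Cβ : ℝ, ∀ α, |β α| ≤ Cβ) ∧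
        ∀ x ∈ V, g (a • x + b) = ∫ α, β α * ϕ ⟪α, x⟫ ∂p)

/-!
Stone–Weierstrass reduces `F`, up to `ε / 3`, to a polynomial in finitely many point
evaluations `u(x₁), …, u(xₘ)`. On the compact set `V` of evaluation vectors, richness of `pₘ`
turns this polynomial, up to `ε / 3`, into an integral `∫ B(α) ϕ(α · z) dpₘ(α)` with `B` bounded,
and the weights `wᵢ = B(αᵢ) / M` are its Monte Carlo estimate. Chebyshev's inequality controls
the Monte Carlo error simultaneously at the points of a finite net of `V` and for the fraction of
samples outside a large ball; off that ball the features `z ↦ B(α) ϕ(α · z)` are uniformly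
Lipschitz, which carries the bound from the net to all of `V`.
-/

open Filter Topology ProbabilityTheory

lemma abs_sub_le_add_mul_indicator {X : Type*} {f g : X → ℝ} {C η : ℝ} (hf : ∀ x, |f x| ≤ C)
    (hg : ∀ x, |g x| ≤ C) (hη : 0 ≤ η) {T : Set X} (h : ∀ x ∉ T, |f x - g x| ≤ η) (x : X) :
    |f x - g x| ≤ η + 2 * |C| * T.indicator 1 x := by
  by_cases hx : x ∈ T
  · simp only [hx, Set.indicator_of_mem, Pi.one_apply, mul_one]
    linarith [abs_sub (f x) (g x), hf x, hg x, le_abs_self C]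
  · simpa [hx] using h x hx

noncomputable def empiricalMean {X : Type*} {M : ℕ} (f : X → ℝ) (xs : Fin M → X) : ℝ :=
  (∑ i, f (xs i)) / M

section EmpiricalMean

variable {X : Type*} {M : ℕ}

lemma abs_empiricalMean_sub_le {f₁ f₂ g : X → ℝ} (h : ∀ x, |f₁ x - f₂ x| ≤ g x)
    (xs : Fin M → X) : |empiricalMean f₁ xs - empiricalMean f₂ xs| ≤ empiricalMean g xs := by
  rw [empiricalMean, empiricalMean, empiricalMean, ← sub_div, ← Finset.sum_sub_distrib, abs_div,
    Nat.abs_cast]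
  gcongr
  exact (Finset.abs_sum_le_sum_abs _ _).trans (Finset.sum_le_sum fun i _ => h _)

variable [MeasurableSpace X] {μ : Measure X}

lemma measurable_empiricalMean {f : X → ℝ} (hf : Measurable f) :
    Measurable (empiricalMean (M := M) f) :=
  (Finset.measurable_sum _ fun i _ => hf.comp (measurable_pi_apply i)).div_const _

lemma abs_empiricalMean_sub_integral_le {f₁ f₂ g : X → ℝ} (hf₁ : Integrable f₁ μ)
    (hf₂ : Integrable f₂ μ) (hg : Integrable g μ) (h : ∀ x, |f₁ x - f₂ x| ≤ g x)
    (xs : Fin M → X) :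
    |empiricalMean f₁ xs - ∫ x, f₁ x ∂μ|
      ≤ |empiricalMean f₂ xs - ∫ x, f₂ x ∂μ| + empiricalMean g xs + ∫ x, g x ∂μ := by
  have h_mean := abs_empiricalMean_sub_le h xs
  have h_int : |∫ x, f₁ x ∂μ - ∫ x, f₂ x ∂μ| ≤ ∫ x, g x ∂μ := by
    rw [← integral_sub hf₁ hf₂]
    exact abs_integral_le_integral_abs.trans (integral_mono (hf₁.sub hf₂).abs hg h)
  have h₁ := abs_sub_le (empiricalMean f₁ xs) (empiricalMean f₂ xs) (∫ x, f₁ x ∂μ)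
  have h₂ := abs_sub_le (empiricalMean f₂ xs) (∫ x, f₂ x ∂μ) (∫ x, f₁ x ∂μ)
  rw [abs_sub_comm (∫ x, f₂ x ∂μ)] at h₂
  linarith

variable [IsProbabilityMeasure μ]

lemma integral_empiricalMean {f : X → ℝ} (hf : Integrable f μ) (hM : M ≠ 0) :
    ∫ xs, empiricalMean f xs ∂Measure.pi (fun _ : Fin M => μ) = ∫ x, f x ∂μ := by
  simp only [empiricalMean]
  rw [integral_div, integral_finsetSum _ fun i _ => integrable_comp_eval hf]
  simp [integral_comp_eval (μ := fun _ => μ) hf.aestronglyMeasurable, hM]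

lemma variance_empiricalMean_le {f : X → ℝ} (hf : Measurable f) {C : ℝ}
    (hC : ∀ x, |f x| ≤ C) :
    Var[empiricalMean f; Measure.pi (fun _ : Fin M => μ)] ≤ C ^ 2 / M := by
  have hf2 : MemLp f 2 μ := MemLp.of_bound hf.aestronglyMeasurable C (ae_of_all _ hC)
  have h_sum : Var[fun xs : Fin M → X => ∑ i, f (xs i); Measure.pi fun _ => μ]
      = M * Var[f; μ] := by
    rw [← Finset.sum_fn]
    simp [variance_sum_pi (X := fun _ => f) fun _ => hf2]
  have h_var : Var[f; μ] ≤ C ^ 2 := by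
    have := variance_le_sq_of_bounded (μ := μ) (a := -C) (b := C)
      (ae_of_all _ fun x => abs_le.1 (hC x)) hf.aemeasurable
    simpa using this
  have h_mean : empiricalMean (M := M) f = fun xs => (∑ i, f (xs i)) * (M : ℝ)⁻¹ := by
    ext; simp [empiricalMean, div_eq_mul_inv]
  rw [h_mean, variance_mul_const, h_sum]
  rcases M.eq_zero_or_pos with rfl | hM
  · simp
  · rw [inv_pow, ← div_eq_mul_inv, sq, ← div_div, mul_div_cancel_left₀ _ (by positivity)]
    gcongr

lemma measure_le_abs_empiricalMean_sub_integral_le {f : X → ℝ} (hf : Measurable f) {C : ℝ}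
    (hC : ∀ x, |f x| ≤ C) (hM : M ≠ 0) {t : ℝ} (ht : 0 < t) :
    Measure.pi (fun _ : Fin M => μ) {xs | t ≤ |empiricalMean f xs - ∫ x, f x ∂μ|}
      ≤ ENNReal.ofReal (C ^ 2 / (M * t ^ 2)) := by
  have hf2 : MemLp f 2 μ := MemLp.of_bound hf.aestronglyMeasurable C (ae_of_all _ hC)
  have h_mean2 : MemLp (empiricalMean f) 2 (Measure.pi fun _ : Fin M => μ) := by
    show MemLp (fun xs : Fin M → X => (∑ i, f (xs i)) / M) 2 _
    simpa [div_eq_mul_inv] using (memLp_finsetSum _ fun i _ =>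
      hf2.comp_measurePreserving (measurePreserving_eval _ i)).mul_const (M : ℝ)⁻¹
  calc _ = Measure.pi (fun _ : Fin M => μ)
        {xs | t ≤ |empiricalMean f xs - ∫ ys, empiricalMean f ys ∂Measure.pi fun _ => μ|} := by
        rw [integral_empiricalMean (hf2.integrable one_le_two) hM]
    _ ≤ ENNReal.ofReal (Var[empiricalMean f; Measure.pi fun _ : Fin M => μ] / t ^ 2) :=
        meas_ge_le_variance_div_sq h_mean2 ht
    _ ≤ ENNReal.ofReal (C ^ 2 / (M * t ^ 2)) := by
        rw [← div_div]
        gcongr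
        exact variance_empiricalMean_le hf hC

lemma measurableSet_forall_abs_empiricalMean_sub_lt {ι : Type*} [Countable ι] {f : ι → X → ℝ}
    (hf : ∀ k, Measurable (f k)) (c : ι → ℝ) (t : ℝ) :
    MeasurableSet {xs : Fin M → X | ∀ k, |empiricalMean (f k) xs - c k| < t} := by
  simp only [Set.ofPred_forall]
  exact MeasurableSet.iInter fun k =>
    measurableSet_lt ((measurable_empiricalMean (hf k)).sub_const _).abs measurable_const

lemma exists_measure_forall_abs_empiricalMean_sub_integral_lt {ι : Type*} [Fintype ι]
    {f : ι → X → ℝ} (hf : ∀ k, Measurable (f k)) {C : ℝ} (hC : ∀ k x, |f k x| ≤ C)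
    {t : ℝ} (ht : 0 < t) {δ : ℝ} (hδ : 0 < δ) :
    ∃ M : ℕ, M ≠ 0 ∧ ENNReal.ofReal (1 - δ) ≤ Measure.pi (fun _ : Fin M => μ)
      {xs | ∀ k, |empiricalMean (f k) xs - ∫ x, f k x ∂μ| < t} := by
  obtain ⟨M, hM⟩ := exists_nat_gt (Fintype.card ι * C ^ 2 / (t ^ 2 * δ))
  have hM₀ : (0 : ℝ) < M := lt_of_le_of_lt (by positivity) hM
  have hM_ne : M ≠ 0 := by exact_mod_cast hM₀.ne'
  refine ⟨M, hM_ne, ?_⟩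
  set bad : ι → Set (Fin M → X) := fun k => {xs | t ≤ |empiricalMean (f k) xs - ∫ x, f k x ∂μ|}
  have h_good : {xs | ∀ k, |empiricalMean (f k) xs - ∫ x, f k x ∂μ| < t} = (⋃ k, bad k)ᶜ := by
    ext; simp [bad]
  have h_bad : Measure.pi (fun _ : Fin M => μ) (⋃ k, bad k) ≤ ENNReal.ofReal δ :=
    calc _ ≤ ∑ k, Measure.pi (fun _ : Fin M => μ) (bad k) := measure_iUnion_fintype_le _ _
      _ ≤ ∑ _k : ι, ENNReal.ofReal (C ^ 2 / (M * t ^ 2)) := by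
          gcongr with k
          exact measure_le_abs_empiricalMean_sub_integral_le (hf k) (hC k) hM_ne ht
      _ ≤ ENNReal.ofReal δ := by
          rw [Finset.sum_const, nsmul_eq_mul, Finset.card_univ, ← ENNReal.ofReal_natCast,
            ← ENNReal.ofReal_mul (by positivity)]
          refine ENNReal.ofReal_le_ofReal ?_
          rw [div_lt_iff₀ (by positivity)] at hM
          rw [← mul_div_assoc, div_le_iff₀ (by positivity)]
          nlinarith
  have h_meas : MeasurableSet (⋃ k, bad k) := by
    rw [← compl_compl (⋃ k, bad k), ← h_good]
    exact (measurableSet_forall_abs_empiricalMean_sub_lt hf _ t).compl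
  rw [h_good, prob_compl_eq_one_sub h_meas, ENNReal.ofReal_sub _ hδ.le, ENNReal.ofReal_one]
  exact tsub_le_tsub_left h_bad 1

end EmpiricalMean

section UniformLaw

variable {X : Type*} [MeasurableSpace X] {μ : Measure X} [IsProbabilityMeasure μ] {M : ℕ}

lemma abs_empiricalMean_sub_integral_le_of_abs_sub_le_add_indicator {f₁ f₂ : X → ℝ}
    (hf₁ : Integrable f₁ μ) (hf₂ : Integrable f₂ μ) {T : Set X} (hT : MeasurableSet T)
    {η c : ℝ} (h : ∀ x, |f₁ x - f₂ x| ≤ η + c * T.indicator 1 x) (hM : M ≠ 0)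
    (xs : Fin M → X) :
    |empiricalMean f₁ xs - ∫ x, f₁ x ∂μ| ≤ |empiricalMean f₂ xs - ∫ x, f₂ x ∂μ| + 2 * η
      + c * (empiricalMean (T.indicator 1) xs + μ.real T) := by
  have h_ind : Integrable (T.indicator (1 : X → ℝ)) μ := (integrable_const 1).indicator hT
  have h_mean : empiricalMean (fun x => η + c * T.indicator 1 x) xs
      = η + c * empiricalMean (T.indicator 1) xs := by
    simp only [empiricalMean, Finset.sum_add_distrib, ← Finset.mul_sum, Finset.sum_const,
      Finset.card_univ, Fintype.card_fin, nsmul_eq_mul]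
    field_simp
  have h_int : ∫ x, η + c * T.indicator 1 x ∂μ = η + c * μ.real T := by
    rw [integral_add (integrable_const η) (h_ind.const_mul c), integral_const_mul,
      integral_indicator_one hT]
    simp
  have := abs_empiricalMean_sub_integral_le (g := fun x => η + c * T.indicator 1 x) hf₁ hf₂
    ((integrable_const η).add (h_ind.const_mul c)) h xs
  rw [h_mean, h_int] at this
  linarith

theorem exists_measure_forall_abs_empiricalMean_sub_integral_lt_of_totallyBounded
    {Z : Type*} [PseudoMetricSpace Z] {V : Set Z} (hV : TotallyBounded V)
    {h : Z → X → ℝ} (hm : ∀ z, Measurable (h z)) {C : ℝ} (hC : ∀ z x, |h z x| ≤ C)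
    (h_equi : ∀ η > 0, ∃ T : Set X, MeasurableSet T ∧ μ T ≤ ENNReal.ofReal η ∧
      ∃ τ > 0, ∀ z y, dist z y < τ → ∀ x ∉ T, |h z x - h y x| ≤ η)
    {ε δ : ℝ} (hε : 0 < ε) (hδ : 0 < δ) :
    ∃ (M : ℕ) (E : Set (Fin M → X)), MeasurableSet E ∧
      ENNReal.ofReal (1 - δ) ≤ Measure.pi (fun _ : Fin M => μ) E ∧
      ∀ xs ∈ E, ∀ z ∈ V, |empiricalMean (h z) xs - ∫ x, h z x ∂μ| < ε := by
  -- budget: `η` at the net point, `2η` from the envelope, `6|C|η` from the bad set `T`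
  set η := ε / (3 + 6 * |C|)
  have hη : 0 < η := by positivity
  obtain ⟨T, hT, hμT, τ, hτ, h_near⟩ := h_equi η hη
  obtain ⟨net, h_fin, h_cover⟩ := Metric.totallyBounded_iff.mp hV τ hτ
  have := h_fin.fintype
  -- `none` indexes the indicator of `T`, `some y` the function `h y` at a net point `y`
  set f : Option net → X → ℝ := fun k => k.elim (T.indicator 1) fun y => h y
  have hf : ∀ k, Measurable (f k) := by
    rintro (_ | y)
    exacts [measurable_const.indicator hT, hm y]
  have hf_le : ∀ k x, |f k x| ≤ max |C| 1 := by
    rintro (_ | y) x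
    · refine le_trans ?_ (le_max_right _ _)
      by_cases hx : x ∈ T <;> simp [f, hx]
    · exact ((hC y x).trans (le_abs_self C)).trans (le_max_left _ _)
  obtain ⟨M, hM, h_prob⟩ :=
    exists_measure_forall_abs_empiricalMean_sub_integral_lt (μ := μ) hf hf_le hη hδ
  refine ⟨M, _, measurableSet_forall_abs_empiricalMean_sub_lt hf _ η, h_prob,
    fun xs hxs z hz => ?_⟩
  obtain ⟨y, hy, hzy⟩ := Set.mem_iUnion₂.mp (h_cover hz)
  have h_env := abs_sub_le_add_mul_indicator (hC z) (hC y) hη.le (h_near z y hzy)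
  have h_int : ∀ w, Integrable (h w) μ := fun w =>
    Integrable.of_bound (hm w).aestronglyMeasurable C (ae_of_all _ (hC w))
  have h_bound := abs_empiricalMean_sub_integral_le_of_abs_sub_le_add_indicator (h_int z)
    (h_int y) hT h_env hM xs
  have h_y : |empiricalMean (h y) xs - ∫ x, h y x ∂μ| < η := hxs (some ⟨y, hy⟩)
  have h_T : |empiricalMean (T.indicator 1) xs - μ.real T| < η := by
    simpa [f, integral_indicator_one hT] using hxs none
  have hμT' : μ.real T ≤ η := ENNReal.toReal_le_of_le_ofReal hη.le hμT
  have h_bad : 2 * |C| * (empiricalMean (T.indicator 1) xs + μ.real T) ≤ 2 * |C| * (3 * η) := by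
    gcongr
    linarith [(abs_lt.mp h_T).2]
  have h_budget : η * (3 + 6 * |C|) = ε := div_mul_cancel₀ _ (by positivity)
  nlinarith

end UniformLaw

lemma tendsto_measure_norm_gt_atTop {E : Type*} [SeminormedAddCommGroup E] [MeasurableSpace E]
    [OpensMeasurableSpace E] (μ : Measure E) [IsFiniteMeasure μ] :
    Tendsto (fun r : ℝ => μ {x | r < ‖x‖}) atTop (𝓝 0) := by
  have h := tendsto_measure_iInter_atTop (μ := μ) (s := fun r : ℝ => {x : E | r < ‖x‖})
    (fun r => (measurableSet_lt measurable_const continuous_norm.measurable).nullMeasurableSet)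
    (fun r r' hrr' x hx => lt_of_le_of_lt hrr' hx) ⟨0, measure_ne_top _ _⟩
  have h_empty : ⋂ r : ℝ, {x : E | r < ‖x‖} = ∅ :=
    Set.eq_empty_of_forall_notMem fun x hx => lt_irrefl ‖x‖ (Set.mem_iInter.mp hx ‖x‖)
  rwa [h_empty, measure_empty] at h

section RandomFeatures

open NNReal

variable {E : Type*} [NormedAddCommGroup E] [InnerProductSpace ℝ E] [MeasurableSpace E]
  [OpensMeasurableSpace E]

lemma measurable_mul_comp_inner {B : E → ℝ} (hB : Measurable B) {ϕ : ℝ → ℝ} (hϕ : Measurable ϕ)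
    (z : E) : Measurable fun α => B α * ϕ ⟪α, z⟫ :=
  hB.mul (hϕ.comp (continuous_id.inner continuous_const).measurable)

lemma exists_measure_le_forall_abs_mul_inner_sub_le (μ : Measure E) [IsFiniteMeasure μ]
    {ϕ : ℝ → ℝ} {L : ℝ≥0} (hϕ : LipschitzWith L ϕ) {B : E → ℝ} {C : ℝ} (hB : ∀ α, |B α| ≤ C)
    {η : ℝ} (hη : 0 < η) :
    ∃ T : Set E, MeasurableSet T ∧ μ T ≤ ENNReal.ofReal η ∧ ∃ τ > 0, ∀ z y : E, dist z y < τ →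
      ∀ α ∉ T, |B α * ϕ ⟪α, z⟫ - B α * ϕ ⟪α, y⟫| ≤ η := by
  obtain ⟨R, hR, hR₀⟩ := (((tendsto_measure_norm_gt_atTop μ).eventually
    (ge_mem_nhds (ENNReal.ofReal_pos.2 hη))).and (eventually_ge_atTop 0)).exists
  set K := |C| * L * R
  have hK : 0 ≤ K := by positivity
  refine ⟨{α | R < ‖α‖}, measurableSet_lt measurable_const measurable_norm, hR,
    η / (K + 1), by positivity, fun z y hzy α hα => ?_⟩
  have hα : ‖α‖ ≤ R := not_lt.mp hα
  calc |B α * ϕ ⟪α, z⟫ - B α * ϕ ⟪α, y⟫| = |B α| * dist (ϕ ⟪α, z⟫) (ϕ ⟪α, y⟫) := by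
        rw [← mul_sub, abs_mul, Real.dist_eq]
    _ ≤ |C| * (L * (‖α‖ * dist z y)) := by
        refine mul_le_mul ((hB α).trans (le_abs_self C)) ((hϕ.dist_le_mul _ _).trans ?_)
          dist_nonneg (abs_nonneg C)
        gcongr
        rw [Real.dist_eq, ← inner_sub_right, dist_eq_norm]
        exact abs_real_inner_le_norm _ _
    _ ≤ K * (η / (K + 1)) := by
        rw [mul_assoc, mul_assoc]
        gcongr
    _ ≤ η := by
        rw [mul_div_assoc', div_le_iff₀ (by positivity)]
        nlinarith

theorem exists_measure_forall_abs_empiricalMean_mul_inner_sub_integral_lt (μ : Measure E)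
    [IsProbabilityMeasure μ] {V : Set E} (hV : TotallyBounded V) {ϕ : ℝ → ℝ} {L : ℝ≥0}
    (hϕ : LipschitzWith L ϕ) {D : ℝ} (hϕD : ∀ t, |ϕ t| ≤ D) {B : E → ℝ} (hBm : Measurable B)
    {C : ℝ} (hB : ∀ α, |B α| ≤ C) {ε δ : ℝ} (hε : 0 < ε) (hδ : 0 < δ) :
    ∃ (M : ℕ) (S : Set (Fin M → E)), MeasurableSet S ∧
      ENNReal.ofReal (1 - δ) ≤ Measure.pi (fun _ : Fin M => μ) S ∧
      ∀ αs ∈ S, ∀ z ∈ V, |empiricalMean (fun α => B α * ϕ ⟪α, z⟫) αs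
        - ∫ α, B α * ϕ ⟪α, z⟫ ∂μ| < ε := by
  refine exists_measure_forall_abs_empiricalMean_sub_integral_lt_of_totallyBounded
    (h := fun z α => B α * ϕ ⟪α, z⟫) (C := C * D) hV (fun z => ?_) (fun z α => ?_)
    (fun _ hη => exists_measure_le_forall_abs_mul_inner_sub_le μ hϕ hB hη) hε hδ
  · exact measurable_mul_comp_inner hBm hϕ.continuous.measurable z
  · rw [abs_mul]
    exact mul_le_mul (hB α) (hϕD _) (abs_nonneg _) ((abs_nonneg _).trans (hB α))

end RandomFeatures

lemma IsRich.exists_integral_approx {q : ℕ} {ϕ : ℝ → ℝ} (hϕm : Measurable ϕ) {D : ℝ}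
    (hϕD : ∀ t, |ϕ t| ≤ D) {V : Set (EuclideanSpace ℝ (Fin q))}
    {p : Measure (EuclideanSpace ℝ (Fin q))} [IsFiniteMeasure p] (h_rich : IsRich ϕ V p)
    {f : EuclideanSpace ℝ (Fin q) → ℝ} (hf : ContinuousOn f V) {ε : ℝ} (hε : 0 < ε) :
    ∃ B : EuclideanSpace ℝ (Fin q) → ℝ, Measurable B ∧ (∃ C, ∀ α, |B α| ≤ C) ∧
      ∀ z ∈ V, |f z - ∫ α, B α * ϕ ⟪α, z⟫ ∂p| < ε := by
  obtain ⟨g, -, -, h_dense, h_repr⟩ := h_rich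
  obtain ⟨N, w, a, b, h_approx⟩ := h_dense f hf ε hε
  choose β hβm hβ_bdd hβ using h_repr
  choose Cβ hCβ using hβ_bdd
  refine ⟨fun α => ∑ j, w j * β (a j) (b j) α,
    Finset.measurable_sum _ fun j _ => (hβm _ _).const_mul _,
    ⟨∑ j, |w j| * Cβ (a j) (b j), fun α => ?_⟩, fun z hz => ?_⟩
  · refine (Finset.abs_sum_le_sum_abs _ _).trans (Finset.sum_le_sum fun j _ => ?_)
    rw [abs_mul]
    exact mul_le_mul_of_nonneg_left (hCβ _ _ α) (abs_nonneg _)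
  · have h_int : ∀ j, Integrable (fun α => β (a j) (b j) α * ϕ ⟪α, z⟫) p := fun j =>
      Integrable.of_bound (measurable_mul_comp_inner (hβm _ _) hϕm z).aestronglyMeasurable
        (Cβ (a j) (b j) * D) (ae_of_all _ fun α => by
          rw [Real.norm_eq_abs, abs_mul]
          exact mul_le_mul (hCβ _ _ α) (hϕD _) (abs_nonneg _) ((abs_nonneg _).trans (hCβ _ _ α)))
    have h_eq : ∑ j, w j * g (a j • z + b j)
        = ∫ α, (∑ j, w j * β (a j) (b j) α) * ϕ ⟪α, z⟫ ∂p := by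
      simp only [hβ _ _ z hz, Finset.sum_mul, mul_assoc, ← integral_const_mul]
      exact (integral_finsetSum _ fun j _ => (h_int j).const_mul _).symm
    rw [← h_eq]
    exact h_approx z hz

theorem exists_mvPolynomial_eval_approx {K : Type*} [TopologicalSpace K] {U : Set C(K, ℝ)}
    (hU : IsCompact U) {F : U → ℝ} (hF : Continuous F) {ε : ℝ} (hε : 0 < ε) :
    ∃ (m : ℕ) (x : Fin m → K) (P : MvPolynomial (Fin m) ℝ),
      ∀ u : U, |F u - MvPolynomial.eval (fun j => (u : C(K, ℝ)) (x j)) P| < ε := by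
  have := isCompact_iff_compactSpace.mp hU
  let ev : K → C(U, ℝ) := fun y => ⟨fun u => (u : C(K, ℝ)) y,
    (continuous_eval_const y).comp continuous_subtype_val⟩
  have h_sep : (MvPolynomial.aeval (R := ℝ) ev).range.SeparatesPoints := by
    intro u v huv
    obtain ⟨y, hy⟩ : ∃ y, (u : C(K, ℝ)) y ≠ (v : C(K, ℝ)) y := by
      by_contra! h
      exact huv (Subtype.ext (ContinuousMap.ext h))
    exact ⟨ev y, ⟨ev y, ⟨MvPolynomial.X y, by simp⟩, rfl⟩, hy⟩
  obtain ⟨⟨G, P, rfl⟩, hG⟩ :=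
    ContinuousMap.exists_mem_subalgebra_near_continuous_of_separatesPoints _ h_sep F hF ε hε
  obtain ⟨m, x, -, Q, rfl⟩ := P.exists_fin_rename
  refine ⟨m, x, Q, fun u => ?_⟩
  have h_eval : MvPolynomial.aeval ev (MvPolynomial.rename x Q) u
      = MvPolynomial.eval (fun j => (u : C(K, ℝ)) (x j)) Q := by
    rw [MvPolynomial.aeval_rename]
    exact MvPolynomial.comp_aeval_apply _ (ContinuousMap.evalAlgHom ℝ ℝ u) Q
  rw [abs_sub_comm, ← h_eval]
  simpa using hG u

theorem random_feature_approximation_of_functionals_general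
    (d : ℕ) (K : Set (EuclideanSpace ℝ (Fin d)))
    (U : Set C(K, ℝ)) (hU : IsCompact U)
    (F : U → ℝ) (hF : Continuous F)
    (ϕ : ℝ → ℝ) (hϕLip : ∃ L : NNReal, LipschitzWith L ϕ)
    (hϕbdd : ∀ t : ℝ, |ϕ t| ≤ 1)
    (p : ∀ m : ℕ, Measure (EuclideanSpace ℝ (Fin m)))
    (hp : ∀ m, IsProbabilityMeasure (p m))
    (hrich : ∀ (m : ℕ) (V : Set (EuclideanSpace ℝ (Fin m))), IsCompact V → IsRich ϕ V (p m))
    (ε : ℝ) (hε : 0 < ε) (δ : ℝ) (hδ : δ ∈ Set.Ioo (0 : ℝ) 1) :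
    ∃ (m M : ℕ) (x : Fin m → K), ∃ E : Set (Fin M → EuclideanSpace ℝ (Fin m)),
      MeasurableSet E ∧
      ENNReal.ofReal (1 - δ) ≤ (Measure.pi fun _ : Fin M => p m) E ∧
      ∀ αs ∈ E, ∃ w : Fin M → ℝ,
        ∀ u : U,
          |F u - ∑ i, w i *
            ϕ ⟪αs i, (WithLp.equiv 2 (Fin m → ℝ)).symm (fun j => (u : C(K, ℝ)) (x j))⟫| < ε := by
  obtain ⟨L, hϕ⟩ := hϕLip
  have hε₃ : 0 < ε / 3 := by positivity
  obtain ⟨m, x, P, hP⟩ := exists_mvPolynomial_eval_approx hU hF hε₃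
  have := hp m
  set ev : U → EuclideanSpace ℝ (Fin m) :=
    fun u => (WithLp.equiv 2 (Fin m → ℝ)).symm fun j => (u : C(K, ℝ)) (x j)
  have := isCompact_iff_compactSpace.mp hU
  have hV : IsCompact (Set.range ev) := isCompact_range <| (PiLp.continuous_toLp 2 _).comp <|
    continuous_pi fun j => (continuous_eval_const (x j)).comp continuous_subtype_val
  obtain ⟨B, hBm, ⟨C, hB⟩, h_int⟩ := (hrich m _ hV).exists_integral_approx
    hϕ.continuous.measurable hϕbdd
    ((MvPolynomial.continuous_eval P).comp (PiLp.continuous_ofLp 2 _)).continuousOn hε₃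
  obtain ⟨M, S, hS, hμS, h_mc⟩ := exists_measure_forall_abs_empiricalMean_mul_inner_sub_integral_lt
    (p m) hV.totallyBounded hϕ hϕbdd hBm hB hε₃ hδ.1
  refine ⟨m, M, x, S, hS, hμS, fun αs hαs => ⟨fun i => B (αs i) / M, fun u => ?_⟩⟩
  have h_sum : ∑ i, B (αs i) / M * ϕ ⟪αs i, ev u⟫
      = empiricalMean (fun α => B α * ϕ ⟪α, ev u⟫) αs := by
    simp only [empiricalMean, Finset.sum_div, div_mul_eq_mul_div]
  have h_poly := hP u
  have h_feat : |MvPolynomial.eval (fun j => (u : C(K, ℝ)) (x j)) P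
      - ∫ α, B α * ϕ ⟪α, ev u⟫ ∂p m| < ε / 3 := h_int (ev u) ⟨u, rfl⟩
  have h_emp := h_mc αs hαs (ev u) ⟨u, rfl⟩
  rw [h_sum, abs_lt]
  rw [abs_lt] at h_poly h_feat h_emp
  constructor <;> linarith

theorem random_feature_approximation_of_functionals
    (d : ℕ) (K : Set (EuclideanSpace ℝ (Fin d))) (hK : IsCompact K)
    (U : Set C(K, ℝ)) (hU : IsCompact U)
    (F : U → ℝ) (hF : Continuous F)
    (ϕ : ℝ → ℝ) (hϕLip : ∃ L : NNReal, LipschitzWith L ϕ)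
    (hϕbdd : ∀ t : ℝ, |ϕ t| ≤ 1)
    (p : ∀ m : ℕ, Measure (EuclideanSpace ℝ (Fin m)))
    (hp : ∀ m, IsProbabilityMeasure (p m))
    (hrich : ∀ (m : ℕ) (V : Set (EuclideanSpace ℝ (Fin m))), IsCompact V → IsRich ϕ V (p m))
    (ε : ℝ) (hε : 0 < ε) (δ : ℝ) (hδ : δ ∈ Set.Ioo (0 : ℝ) 1) :
    ∃ (m M : ℕ) (x : Fin m → K), ∃ E : Set (Fin M → EuclideanSpace ℝ (Fin m)),
      MeasurableSet E ∧
      ENNReal.ofReal (1 - δ) ≤ (Measure.pi fun _ : Fin M => p m) E ∧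
      ∀ αs ∈ E, ∃ w : Fin M → ℝ,
        ∀ u : U,
          |F u - ∑ i, w i *
            ϕ ⟪αs i, (WithLp.equiv 2 (Fin m → ℝ)).symm (fun j => (u : C(K, ℝ)) (x j))⟫| < ε :=
  random_feature_approximation_of_functionals_general d K U hU F hF ϕ hϕLip hϕbdd p hp hrich ε hε δ
    hδ
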